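/- arXiv:2210.08259 — 2 statements merged into one kernel-verified Lean document; each statement's English description precedes it below -/
import Mathlib

section
/- Assume: T > 0; d1, d2, r1, r2, a1, a2, b1, b2 : ℝ → ℝ are continuous, positive, T-periodic; the kernels J1, J2 are nonnegative, Lebesgue measurable, satisfy ∫_ℝ Ji(x) dx = 1 and ∫_ℝ Ji(x)e^{−λx} dx < ∞ for every λ ∈ ℝ. Let (φ⁻, ψ⁻) and (φ⁺, ψ⁺) be, respectively, a bounded lower solution and a bounded upper solution of the cooperative Cauchy system on ℝ × [0, ∞), taking values in [0,1] × [0,1], and let (φ, ψ) be a bounded solution (satisfying the system with equality) with initial data (φ0, ψ0). If φ⁻(x,0) ≤ φ0(x) ≤ φ⁺(x,0) and ψ⁻(x,0) ≤ ψ0(x) ≤ ψ⁺(x,0) for all x ∈ ℝ, then φ⁻(x,t) ≤ φ(x,t) ≤ φ⁺(x,t) and ψ⁻(x,t) ≤ ψ(x,t) ≤ ψ⁺(x,t) for all (x,t) ∈ ℝ × [0, ∞). -/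
/-!
Comparison by iteration. Let `(u₁, v₁)` be a lower and `(u₂, v₂)` an upper solution, and suppose
`u₂ - u₁ ≥ -G(t)` and `v₂ - v₁ ≥ -G(t)` for all `x`. The differences of the reaction terms are
`A (u₂ - u₁) + b₁ q · u₂ (v₂ - v₁)` and `A' (v₂ - v₁) + a₂ p · (1 - v₁) (u₂ - u₁)` with bounded
`A, A'`, and the coupling factors `u₂`, `1 - v₁` are `≥ -G` as soon as one of the two pairs lies in
the quasi-monotone region `u ≥ 0, v ≤ 1`. Since `A w ≥ -L w - 2 L G` for `|A| ≤ L`, each difference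
satisfies `w' ≥ -L w - K G`, and the integrating factor `e^{L t}` gives `w(t) ≥ -K ∫₀ᵗ G`.
Iterating from the crude bound `G = 2B` yields `w(t) ≥ -2B (K t)ⁿ / n! → 0`. The theorem is this
comparison for the pairs `(φ⁻, ψ⁻), (φ, ψ)` and `(φ, ψ), (φ⁺, ψ⁺)`.
-/

open MeasureTheory Set Filter

noncomputable def p0c (r a : ℝ → ℝ) (T : ℝ) : ℝ :=
  (Real.exp (∫ s in (0:ℝ)..T, r s) - 1) /
    ∫ s in (0:ℝ)..T, Real.exp (∫ τ in (0:ℝ)..s, r τ) * a s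

noncomputable def pfun (r a : ℝ → ℝ) (T t : ℝ) : ℝ :=
  p0c r a T * Real.exp (∫ s in (0:ℝ)..t, r s) /
    (1 + p0c r a T * ∫ s in (0:ℝ)..t, Real.exp (∫ τ in (0:ℝ)..s, r τ) * a s)

/-- A solution of the cooperative Cauchy system on ℝ × (0, ∞). -/
def IsCauchySolution (d1 d2 J1 J2 a1 b1 a2 b2 p q : ℝ → ℝ) (φ ψ : ℝ → ℝ → ℝ) : Prop :=
  Continuous (fun xt : ℝ × ℝ => φ xt.1 xt.2) ∧
  Continuous (fun xt : ℝ × ℝ => ψ xt.1 xt.2) ∧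
  ∀ x t : ℝ, 0 < t →
    HasDerivAt (fun s => φ x s)
      (d1 t * ((∫ y, J1 y * φ (x - y) t) - φ x t) +
        φ x t * (a1 t * p t * (1 - φ x t) - b1 t * q t * (1 - ψ x t))) t ∧
    HasDerivAt (fun s => ψ x s)
      (d2 t * ((∫ y, J2 y * ψ (x - y) t) - ψ x t) +
        (1 - ψ x t) * (a2 t * p t * φ x t - b2 t * q t * ψ x t)) t

/-- An upper solution of the cooperative Cauchy system on ℝ × (0, ∞). -/
def IsCauchyUpper (d1 d2 J1 J2 a1 b1 a2 b2 p q : ℝ → ℝ) (φ ψ : ℝ → ℝ → ℝ) : Prop :=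
  Continuous (fun xt : ℝ × ℝ => φ xt.1 xt.2) ∧
  Continuous (fun xt : ℝ × ℝ => ψ xt.1 xt.2) ∧
  ∀ x t : ℝ, 0 < t →
    ∃ φt ψt : ℝ,
      HasDerivAt (fun s => φ x s) φt t ∧ HasDerivAt (fun s => ψ x s) ψt t ∧
      d1 t * ((∫ y, J1 y * φ (x - y) t) - φ x t) +
        φ x t * (a1 t * p t * (1 - φ x t) - b1 t * q t * (1 - ψ x t)) ≤ φt ∧
      d2 t * ((∫ y, J2 y * ψ (x - y) t) - ψ x t) +
        (1 - ψ x t) * (a2 t * p t * φ x t - b2 t * q t * ψ x t) ≤ ψt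

/-- A lower solution of the cooperative Cauchy system on ℝ × (0, ∞). -/
def IsCauchyLower (d1 d2 J1 J2 a1 b1 a2 b2 p q : ℝ → ℝ) (φ ψ : ℝ → ℝ → ℝ) : Prop :=
  Continuous (fun xt : ℝ × ℝ => φ xt.1 xt.2) ∧
  Continuous (fun xt : ℝ × ℝ => ψ xt.1 xt.2) ∧
  ∀ x t : ℝ, 0 < t →
    ∃ φt ψt : ℝ,
      HasDerivAt (fun s => φ x s) φt t ∧ HasDerivAt (fun s => ψ x s) ψt t ∧
      φt ≤ d1 t * ((∫ y, J1 y * φ (x - y) t) - φ x t) +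
        φ x t * (a1 t * p t * (1 - φ x t) - b1 t * q t * (1 - ψ x t)) ∧
      ψt ≤ d2 t * ((∫ y, J2 y * ψ (x - y) t) - ψ x t) +
        (1 - ψ x t) * (a2 t * p t * φ x t - b2 t * q t * ψ x t)

theorem neg_mul_le_mul_of_mem_Icc {a b c B : ℝ} (ha : a ∈ Icc (-c) B) (hb : b ∈ Icc (-c) B)
    (hc : 0 ≤ c) (hB : 0 ≤ B) : -(B * c) ≤ a * b := by
  obtain ⟨ha₁, ha₂⟩ := ha
  obtain ⟨hb₁, hb₂⟩ := hb
  rcases le_total 0 a with h | h <;> rcases le_total 0 b with h' | h'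
  · nlinarith
  · nlinarith [mul_le_mul_of_nonneg_right ha₂ (by linarith : 0 ≤ -b)]
  · nlinarith [mul_le_mul_of_nonneg_right hb₂ (by linarith : 0 ≤ -a)]
  · nlinarith

theorem abs_mul_sub_mul_sub_le {α β d X Y C P : ℝ} (hα : |α| ≤ C) (hβ : |β| ≤ C) (hd : |d| ≤ C)
    (hX : |X| ≤ P) (hY : |Y| ≤ P) : |α * X - β * Y - d| ≤ 2 * C * P + C := by
  have hC : 0 ≤ C := (abs_nonneg _).trans hα
  calc |α * X - β * Y - d| ≤ |α| * |X| + |β| * |Y| + |d| := by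
        rw [← abs_mul, ← abs_mul]
        exact (abs_sub _ _).trans (by gcongr; exact abs_sub _ _)
    _ ≤ C * P + C * P + C := by gcongr
    _ = 2 * C * P + C := by ring

theorem neg_mul_sub_le_of_cooperative {d a c Jw w m z C L R G : ℝ} (hd : d ∈ Icc 0 C)
    (ha : |a| ≤ L) (hc : c ∈ Icc 0 C) (hR : 0 ≤ R) (hG : 0 ≤ G) (hJw : -G ≤ Jw) (hw : -G ≤ w)
    (hm : m ∈ Icc (-G) R) (hz : z ∈ Icc (-G) R) :
    -(L * w) - (C + 2 * L + C * R) * G ≤ d * Jw + a * w + c * (m * z) := by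
  obtain ⟨ha₁, ha₂⟩ := abs_le.1 ha
  have hdiff : -(C * G) ≤ d * Jw := by nlinarith [hd.1, hd.2]
  have hlin : -(L * w) - 2 * L * G ≤ a * w := by
    nlinarith [mul_nonneg (by linarith : 0 ≤ a + L) (by linarith : 0 ≤ w + G),
      mul_nonneg (by linarith : 0 ≤ L - a) hG]
  have hmz := neg_mul_le_mul_of_mem_Icc hm hz hG hR
  have hcoup : -(C * (R * G)) ≤ c * (m * z) := by
    nlinarith [hc.1, hc.2, mul_nonneg hR hG]
  nlinarith

theorem neg_le_and_neg_le_one_sub {u₁ v₁ u₂ v₂ G : ℝ}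
    (h : (0 ≤ u₁ ∧ v₁ ≤ 1) ∨ (0 ≤ u₂ ∧ v₂ ≤ 1)) (hG : 0 ≤ G) (hu : -G ≤ u₂ - u₁)
    (hv : -G ≤ v₂ - v₁) : -G ≤ u₂ ∧ -G ≤ 1 - v₁ := by
  rcases h with ⟨h₁, h₂⟩ | ⟨h₁, h₂⟩ <;> constructor <;> linarith

theorem neg_le_integral_mul_sub {J f g : ℝ → ℝ} (hJ : Integrable J) (hJ0 : ∀ y, 0 ≤ J y)
    (hJ1 : ∫ y, J y = 1) {B c : ℝ} (hf : Continuous f) (hg : Continuous g)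
    (hfB : ∀ z, |f z| ≤ B) (hgB : ∀ z, |g z| ≤ B) (hfg : ∀ z, -c ≤ f z - g z) (x : ℝ) :
    -c ≤ (∫ y, J y * f (x - y)) - ∫ y, J y * g (x - y) := by
  have hint : ∀ {u : ℝ → ℝ}, Continuous u → (∀ z, |u z| ≤ B) →
      Integrable fun y => J y * u (x - y) := fun {u} hu huB => by
    simpa only [mul_comm] using hJ.bdd_mul (f := fun y => u (x - y))
      (by fun_prop) (.of_forall fun y => huB (x - y))
  rw [← integral_sub (hint hf hfB) (hint hg hgB)]
  calc -c = ∫ y, J y * -c := by rw [integral_mul_const, hJ1, one_mul]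
    _ ≤ _ := integral_mono (hJ.mul_const _) ((hint hf hfB).sub (hint hg hgB)) fun y => by
        simp only [Pi.sub_apply, ← mul_sub]; exact mul_le_mul_of_nonneg_left (hfg _) (hJ0 y)

theorem neg_integral_le_of_hasDerivAt_ge {w h : ℝ → ℝ} {L t : ℝ} (hL : 0 ≤ L) (ht : 0 ≤ t)
    (hw : ContinuousOn w (Icc 0 t)) (hh : Continuous h) (hh0 : ∀ s ∈ Icc 0 t, 0 ≤ h s)
    (hw0 : 0 ≤ w 0)
    (hderiv : ∀ s ∈ Ioo 0 t, ∃ w', HasDerivAt w w' s ∧ -(L * w s) - h s ≤ w') :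
    -∫ s in 0..t, h s ≤ w t := by
  set E : ℝ → ℝ := fun s => Real.exp (L * s)
  have hE : ∀ s, HasDerivAt E (E s * L) s := fun s => by
    simpa using ((hasDerivAt_id s).const_mul L).exp
  have hEh : Continuous fun σ => E σ * h σ := by fun_prop
  set F : ℝ → ℝ := fun s => E s * w s + ∫ σ in 0..s, E σ * h σ
  have hF : ∀ s ∈ Ioo 0 t, ∃ F', HasDerivAt F F' s ∧ 0 ≤ F' := by
    intro s hs
    obtain ⟨w', hw', hle⟩ := hderiv s hs
    refine ⟨_, ((hE s).mul hw').add (hEh.integral_hasStrictDerivAt 0 s).hasDerivAt, ?_⟩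
    have : 0 ≤ E s * (L * w s + w' + h s) := mul_nonneg (Real.exp_pos _).le (by linarith)
    linarith
  have hmono : MonotoneOn F (Icc 0 t) := by
    refine monotoneOn_of_deriv_nonneg (convex_Icc 0 t) ?_ ?_ ?_
    · have hE' : Continuous E := by fun_prop
      exact (hE'.continuousOn.mul hw).add
        (intervalIntegral.continuous_primitive (hEh.intervalIntegrable · ·) 0).continuousOn
    · rw [interior_Icc]
      exact fun s hs => (hF s hs).choose_spec.1.differentiableAt.differentiableWithinAt
    · rw [interior_Icc]
      exact fun s hs => (hF s hs).choose_spec.1.deriv ▸ (hF s hs).choose_spec.2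
  have hF0 : F 0 = w 0 := by simp [F, E]
  have hFt : w 0 ≤ F t := hF0 ▸ hmono (left_mem_Icc.2 ht) (right_mem_Icc.2 ht) ht
  have hint : ∫ σ in 0..t, E σ * h σ ≤ E t * ∫ σ in 0..t, h σ := by
    rw [← intervalIntegral.integral_const_mul]
    refine intervalIntegral.integral_mono_on ht (hEh.intervalIntegrable 0 t)
      ((hh.const_mul _).intervalIntegrable 0 t) fun σ hσ => ?_
    exact mul_le_mul_of_nonneg_right (Real.exp_le_exp.2 (by nlinarith [hσ.2])) (hh0 σ hσ)
  have : 0 ≤ E t * (w t + ∫ σ in 0..t, h σ) := by simp only [F] at hFt; linarith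
  have := nonneg_of_mul_nonneg_right this (Real.exp_pos (L * t))
  linarith

theorem nonneg_of_forall_neg_le_imp_neg_integral_le {ι : Type*} {W : ι → ℝ → ℝ} {t₀ B K : ℝ}
    (hB : 0 ≤ B) (hK : 0 ≤ K) (hW : ∀ i, ∀ t ∈ Icc 0 t₀, -B ≤ W i t)
    (hstep : ∀ G : ℝ → ℝ, Continuous G → (∀ t ∈ Icc 0 t₀, 0 ≤ G t) →
      (∀ i, ∀ t ∈ Icc 0 t₀, -G t ≤ W i t) →
      ∀ i, ∀ t ∈ Icc 0 t₀, -(K * ∫ s in 0..t, G s) ≤ W i t) :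
    ∀ i, ∀ t ∈ Icc 0 t₀, 0 ≤ W i t := by
  have hbound : ∀ n : ℕ, ∀ i, ∀ t ∈ Icc 0 t₀, -(B * ((K * t) ^ n / n.factorial)) ≤ W i t := by
    intro n
    induction n with
    | zero => simpa using hW
    | succ n ih =>
      intro i t ht
      convert hstep _ (by fun_prop) (fun s hs => by have := hs.1; positivity) ih i t ht using 2
      simp only [mul_pow, intervalIntegral.integral_const_mul, intervalIntegral.integral_div,
        integral_pow, Nat.factorial_succ, Nat.cast_mul, Nat.cast_succ]
      field_simp
      ring
  intro i t ht
  have hlim := ((FloorSemiring.tendsto_pow_div_factorial_atTop (K * t)).const_mul B).neg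
  rw [mul_zero, neg_zero] at hlim
  exact le_of_tendsto' hlim fun n => hbound n i t ht

def CoeffBoundedAt (d1 d2 a1 b1 a2 b2 p q : ℝ → ℝ) (C s : ℝ) : Prop :=
  d1 s ∈ Icc 0 C ∧ d2 s ∈ Icc 0 C ∧ |a1 s * p s| ≤ C ∧ b1 s * q s ∈ Icc 0 C ∧
    a2 s * p s ∈ Icc 0 C ∧ |b2 s * q s| ≤ C

section Comparison

variable {d1 d2 J1 J2 a1 b1 a2 b2 p q : ℝ → ℝ} {u₁ v₁ u₂ v₂ : ℝ → ℝ → ℝ} {B C G s : ℝ}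

theorem exists_hasDerivAt_fst_sub_ge (hlow : IsCauchyLower d1 d2 J1 J2 a1 b1 a2 b2 p q u₁ v₁)
    (hup : IsCauchyUpper d1 d2 J1 J2 a1 b1 a2 b2 p q u₂ v₂) (hJ : Integrable J1)
    (hJ₀ : ∀ y, 0 ≤ J1 y) (hJ₁ : ∫ y, J1 y = 1)
    (hB : ∀ x t, |u₁ x t| ≤ B ∧ |v₁ x t| ≤ B ∧ |u₂ x t| ≤ B ∧ |v₂ x t| ≤ B)
    (hcoop : ∀ x t, (0 ≤ u₁ x t ∧ v₁ x t ≤ 1) ∨ (0 ≤ u₂ x t ∧ v₂ x t ≤ 1))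
    (hs : 0 < s) (hC : CoeffBoundedAt d1 d2 a1 b1 a2 b2 p q C s) (hG : 0 ≤ G)
    (hW : ∀ z, -G ≤ u₂ z s - u₁ z s ∧ -G ≤ v₂ z s - v₁ z s) (x : ℝ) :
    ∃ w', HasDerivAt (fun τ => u₂ x τ - u₁ x τ) w' s ∧
      -((2 * C * (1 + 2 * B) + C) * (u₂ x s - u₁ x s)) - (3 * C + 5 * C * (1 + 2 * B)) * G
        ≤ w' := by
  obtain ⟨u₁', _, hu₁, -, hu₁le, -⟩ := hlow.2.2 x s hs
  obtain ⟨u₂', _, hu₂, -, hu₂le, -⟩ := hup.2.2 x s hs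
  obtain ⟨hd, -, hα, hβ, -, -⟩ := hC
  obtain ⟨hu₁B, hv₁B, hu₂B, hv₂B⟩ := hB x s
  rw [abs_le] at hu₁B hv₁B hu₂B hv₂B
  have hconv := neg_le_integral_mul_sub hJ hJ₀ hJ₁ (hup.1.uncurry_right s)
    (hlow.1.uncurry_right s) (fun z => (hB z s).2.2.1) (fun z => (hB z s).1) (fun z => (hW z).1) x
  have hu₂G := (neg_le_and_neg_le_one_sub (hcoop x s) hG (hW x).1 (hW x).2).1
  have hlin : |a1 s * p s * (1 - u₁ x s - u₂ x s) - b1 s * q s * (1 - v₁ x s) - d1 s|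
      ≤ 2 * C * (1 + 2 * B) + C :=
    abs_mul_sub_mul_sub_le hα (abs_le.2 ⟨by linarith [hβ.1, hβ.2], hβ.2⟩)
      (abs_le.2 ⟨by linarith [hd.1, hd.2], hd.2⟩) (abs_le.2 ⟨by linarith, by linarith⟩)
      (abs_le.2 ⟨by linarith, by linarith⟩)
  refine ⟨u₂' - u₁', hu₂.sub hu₁, ?_⟩
  calc _ ≤ d1 s * ((∫ y, J1 y * u₂ (x - y) s) - ∫ y, J1 y * u₁ (x - y) s)
        + (a1 s * p s * (1 - u₁ x s - u₂ x s) - b1 s * q s * (1 - v₁ x s) - d1 s)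
          * (u₂ x s - u₁ x s)
        + b1 s * q s * (u₂ x s * (v₂ x s - v₁ x s)) := by
        convert neg_mul_sub_le_of_cooperative (R := 1 + 2 * B) hd hlin hβ (by linarith) hG
          hconv (hW x).1 ⟨hu₂G, by linarith⟩ ⟨(hW x).2, by linarith⟩ using 2
        ring
    _ = (d1 s * ((∫ y, J1 y * u₂ (x - y) s) - u₂ x s)
          + u₂ x s * (a1 s * p s * (1 - u₂ x s) - b1 s * q s * (1 - v₂ x s)))
        - (d1 s * ((∫ y, J1 y * u₁ (x - y) s) - u₁ x s)
          + u₁ x s * (a1 s * p s * (1 - u₁ x s) - b1 s * q s * (1 - v₁ x s))) := by ring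
    _ ≤ u₂' - u₁' := sub_le_sub hu₂le hu₁le

theorem exists_hasDerivAt_snd_sub_ge (hlow : IsCauchyLower d1 d2 J1 J2 a1 b1 a2 b2 p q u₁ v₁)
    (hup : IsCauchyUpper d1 d2 J1 J2 a1 b1 a2 b2 p q u₂ v₂) (hJ : Integrable J2)
    (hJ₀ : ∀ y, 0 ≤ J2 y) (hJ₁ : ∫ y, J2 y = 1)
    (hB : ∀ x t, |u₁ x t| ≤ B ∧ |v₁ x t| ≤ B ∧ |u₂ x t| ≤ B ∧ |v₂ x t| ≤ B)
    (hcoop : ∀ x t, (0 ≤ u₁ x t ∧ v₁ x t ≤ 1) ∨ (0 ≤ u₂ x t ∧ v₂ x t ≤ 1))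
    (hs : 0 < s) (hC : CoeffBoundedAt d1 d2 a1 b1 a2 b2 p q C s) (hG : 0 ≤ G)
    (hW : ∀ z, -G ≤ u₂ z s - u₁ z s ∧ -G ≤ v₂ z s - v₁ z s) (x : ℝ) :
    ∃ w', HasDerivAt (fun τ => v₂ x τ - v₁ x τ) w' s ∧
      -((2 * C * (1 + 2 * B) + C) * (v₂ x s - v₁ x s)) - (3 * C + 5 * C * (1 + 2 * B)) * G
        ≤ w' := by
  obtain ⟨_, v₁', -, hv₁, -, hv₁le⟩ := hlow.2.2 x s hs
  obtain ⟨_, v₂', -, hv₂, -, hv₂le⟩ := hup.2.2 x s hs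
  obtain ⟨-, hd, -, -, hγ, hδ⟩ := hC
  obtain ⟨hu₁B, hv₁B, hu₂B, hv₂B⟩ := hB x s
  rw [abs_le] at hu₁B hv₁B hu₂B hv₂B
  have hconv := neg_le_integral_mul_sub hJ hJ₀ hJ₁ (hup.2.1.uncurry_right s)
    (hlow.2.1.uncurry_right s) (fun z => (hB z s).2.2.2) (fun z => (hB z s).2.1)
    (fun z => (hW z).2) x
  have hv₁G := (neg_le_and_neg_le_one_sub (hcoop x s) hG (hW x).1 (hW x).2).2
  have hlin : |-(a2 s * p s) * u₂ x s - b2 s * q s * (1 - v₁ x s - v₂ x s) - d2 s|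
      ≤ 2 * C * (1 + 2 * B) + C :=
    abs_mul_sub_mul_sub_le (by rw [abs_neg]; exact abs_le.2 ⟨by linarith [hγ.1, hγ.2], hγ.2⟩)
      hδ (abs_le.2 ⟨by linarith [hd.1, hd.2], hd.2⟩) (abs_le.2 ⟨by linarith, by linarith⟩)
      (abs_le.2 ⟨by linarith, by linarith⟩)
  refine ⟨v₂' - v₁', hv₂.sub hv₁, ?_⟩
  calc _ ≤ d2 s * ((∫ y, J2 y * v₂ (x - y) s) - ∫ y, J2 y * v₁ (x - y) s)
        + (-(a2 s * p s) * u₂ x s - b2 s * q s * (1 - v₁ x s - v₂ x s) - d2 s)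
          * (v₂ x s - v₁ x s)
        + a2 s * p s * ((1 - v₁ x s) * (u₂ x s - u₁ x s)) := by
        convert neg_mul_sub_le_of_cooperative (R := 1 + 2 * B) hd hlin hγ (by linarith) hG hconv
          (hW x).2 ⟨hv₁G, by linarith⟩ ⟨(hW x).1, by linarith⟩ using 2
        ring
    _ = (d2 s * ((∫ y, J2 y * v₂ (x - y) s) - v₂ x s)
          + (1 - v₂ x s) * (a2 s * p s * u₂ x s - b2 s * q s * v₂ x s))
        - (d2 s * ((∫ y, J2 y * v₁ (x - y) s) - v₁ x s)
          + (1 - v₁ x s) * (a2 s * p s * u₁ x s - b2 s * q s * v₁ x s)) := by ring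
    _ ≤ v₂' - v₁' := sub_le_sub hv₂le hv₁le

theorem IsCauchyLower.le_of_isCauchyUpper
    (hlow : IsCauchyLower d1 d2 J1 J2 a1 b1 a2 b2 p q u₁ v₁)
    (hup : IsCauchyUpper d1 d2 J1 J2 a1 b1 a2 b2 p q u₂ v₂)
    (hJ1 : Integrable J1) (hJ1₀ : ∀ y, 0 ≤ J1 y) (hJ1₁ : ∫ y, J1 y = 1)
    (hJ2 : Integrable J2) (hJ2₀ : ∀ y, 0 ≤ J2 y) (hJ2₁ : ∫ y, J2 y = 1)
    (hB : ∀ x t, |u₁ x t| ≤ B ∧ |v₁ x t| ≤ B ∧ |u₂ x t| ≤ B ∧ |v₂ x t| ≤ B)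
    (hcoop : ∀ x t, (0 ≤ u₁ x t ∧ v₁ x t ≤ 1) ∨ (0 ≤ u₂ x t ∧ v₂ x t ≤ 1))
    {t₀ : ℝ} (ht₀ : 0 ≤ t₀) (hC : ∀ s ∈ Icc 0 t₀, CoeffBoundedAt d1 d2 a1 b1 a2 b2 p q C s)
    (h0 : ∀ x, u₁ x 0 ≤ u₂ x 0 ∧ v₁ x 0 ≤ v₂ x 0) (x : ℝ) :
    u₁ x t₀ ≤ u₂ x t₀ ∧ v₁ x t₀ ≤ v₂ x t₀ := by
  have hC₀ : 0 ≤ C := (abs_nonneg _).trans (hC 0 ⟨le_rfl, ht₀⟩).2.2.1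
  have hB₀ : 0 ≤ B := (abs_nonneg _).trans (hB 0 0).1
  have hL : 0 ≤ 2 * C * (1 + 2 * B) + C := by positivity
  suffices ∀ x, ∀ t ∈ Icc 0 t₀, 0 ≤ min (u₂ x t - u₁ x t) (v₂ x t - v₁ x t) by
    simpa only [le_min_iff, sub_nonneg] using this x t₀ ⟨ht₀, le_rfl⟩
  refine nonneg_of_forall_neg_le_imp_neg_integral_le (B := 2 * B)
    (K := 3 * C + 5 * C * (1 + 2 * B)) (by positivity) (by positivity) (fun x t _ => ?_) ?_
  · obtain ⟨hu₁, hv₁, hu₂, hv₂⟩ := hB x t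
    rw [abs_le] at hu₁ hv₁ hu₂ hv₂
    exact le_min (by linarith) (by linarith)
  intro G hG hG₀ hW x t ht
  simp only [le_min_iff] at hW ⊢
  have hK : Continuous fun s => (3 * C + 5 * C * (1 + 2 * B)) * G s := by fun_prop
  have hK₀ : ∀ s ∈ Icc 0 t, 0 ≤ (3 * C + 5 * C * (1 + 2 * B)) * G s :=
    fun s hs => mul_nonneg (by positivity) (hG₀ s ⟨hs.1, hs.2.trans ht.2⟩)
  have hIcc : ∀ s ∈ Ioo 0 t, s ∈ Icc 0 t₀ := fun s hs => ⟨hs.1.le, hs.2.le.trans ht.2⟩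
  rw [← intervalIntegral.integral_const_mul]
  constructor
  · exact neg_integral_le_of_hasDerivAt_ge hL ht.1
      ((hup.1.uncurry_left x).sub (hlow.1.uncurry_left x)).continuousOn hK hK₀
      (sub_nonneg.2 (h0 x).1) fun s hs =>
        exists_hasDerivAt_fst_sub_ge hlow hup hJ1 hJ1₀ hJ1₁ hB hcoop hs.1 (hC s (hIcc s hs))
          (hG₀ s (hIcc s hs)) (fun z => hW z s (hIcc s hs)) x
  · exact neg_integral_le_of_hasDerivAt_ge hL ht.1
      ((hup.2.1.uncurry_left x).sub (hlow.2.1.uncurry_left x)).continuousOn hK hK₀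
      (sub_nonneg.2 (h0 x).2) fun s hs =>
        exists_hasDerivAt_snd_sub_ge hlow hup hJ2 hJ2₀ hJ2₁ hB hcoop hs.1 (hC s (hIcc s hs))
          (hG₀ s (hIcc s hs)) (fun z => hW z s (hIcc s hs)) x

theorem exists_forall_coeffBoundedAt {t₀ : ℝ} (hd1 : ContinuousOn d1 (Icc 0 t₀))
    (hd2 : ContinuousOn d2 (Icc 0 t₀)) (hα : ContinuousOn (fun s => a1 s * p s) (Icc 0 t₀))
    (hβ : ContinuousOn (fun s => b1 s * q s) (Icc 0 t₀))
    (hγ : ContinuousOn (fun s => a2 s * p s) (Icc 0 t₀))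
    (hδ : ContinuousOn (fun s => b2 s * q s) (Icc 0 t₀))
    (hpos : ∀ s ∈ Icc 0 t₀, 0 ≤ d1 s ∧ 0 ≤ d2 s ∧ 0 ≤ b1 s * q s ∧ 0 ≤ a2 s * p s) :
    ∃ C, ∀ s ∈ Icc 0 t₀, CoeffBoundedAt d1 d2 a1 b1 a2 b2 p q C s := by
  obtain ⟨C, hC⟩ := isCompact_Icc.exists_bound_of_continuousOn
    (hd1.abs.add hd2.abs |>.add hα.abs |>.add hβ.abs |>.add hγ.abs |>.add hδ.abs)
  refine ⟨C, fun s hs => ?_⟩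
  have hsum := (le_abs_self _).trans (hC s hs)
  obtain ⟨h1, h2, h3, h4⟩ := hpos s hs
  simp only [Pi.add_apply, abs_of_nonneg h1, abs_of_nonneg h2, abs_of_nonneg h3,
    abs_of_nonneg h4] at hsum
  have := abs_nonneg (a1 s * p s)
  have := abs_nonneg (b2 s * q s)
  exact ⟨⟨h1, by linarith⟩, ⟨h2, by linarith⟩, by linarith, ⟨h3, by linarith⟩, ⟨h4, by linarith⟩,
    by linarith⟩

end Comparison

theorem IsCauchySolution.isCauchyUpper {d1 d2 J1 J2 a1 b1 a2 b2 p q : ℝ → ℝ} {φ ψ : ℝ → ℝ → ℝ}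
    (h : IsCauchySolution d1 d2 J1 J2 a1 b1 a2 b2 p q φ ψ) :
    IsCauchyUpper d1 d2 J1 J2 a1 b1 a2 b2 p q φ ψ :=
  ⟨h.1, h.2.1, fun x t ht => ⟨_, _, (h.2.2 x t ht).1, (h.2.2 x t ht).2, le_rfl, le_rfl⟩⟩

theorem IsCauchySolution.isCauchyLower {d1 d2 J1 J2 a1 b1 a2 b2 p q : ℝ → ℝ} {φ ψ : ℝ → ℝ → ℝ}
    (h : IsCauchySolution d1 d2 J1 J2 a1 b1 a2 b2 p q φ ψ) :
    IsCauchyLower d1 d2 J1 J2 a1 b1 a2 b2 p q φ ψ :=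
  ⟨h.1, h.2.1, fun x t ht => ⟨_, _, (h.2.2 x t ht).1, (h.2.2 x t ht).2, le_rfl, le_rfl⟩⟩

section Logistic

variable {r a : ℝ → ℝ} {T : ℝ}

theorem integral_exp_integral_mul_nonneg (ha : ∀ s, 0 ≤ a s) {t : ℝ} (ht : 0 ≤ t) :
    0 ≤ ∫ s in (0:ℝ)..t, Real.exp (∫ τ in (0:ℝ)..s, r τ) * a s :=
  intervalIntegral.integral_nonneg ht fun s _ => mul_nonneg (Real.exp_pos _).le (ha s)

theorem p0c_nonneg (hT : 0 ≤ T) (hr : ∀ s, 0 ≤ r s) (ha : ∀ s, 0 ≤ a s) : 0 ≤ p0c r a T :=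
  div_nonneg (sub_nonneg.2 (Real.one_le_exp (intervalIntegral.integral_nonneg hT fun s _ => hr s)))
    (integral_exp_integral_mul_nonneg ha hT)

theorem pfun_denominator_pos (hT : 0 ≤ T) (hr : ∀ s, 0 ≤ r s) (ha : ∀ s, 0 ≤ a s) {t : ℝ}
    (ht : 0 ≤ t) :
    0 < 1 + p0c r a T * ∫ s in (0:ℝ)..t, Real.exp (∫ τ in (0:ℝ)..s, r τ) * a s := by
  have := mul_nonneg (p0c_nonneg hT hr ha) (integral_exp_integral_mul_nonneg (r := r) ha ht)
  linarith

theorem pfun_nonneg (hT : 0 ≤ T) (hr : ∀ s, 0 ≤ r s) (ha : ∀ s, 0 ≤ a s) {t : ℝ}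
    (ht : 0 ≤ t) : 0 ≤ pfun r a T t :=
  div_nonneg (mul_nonneg (p0c_nonneg hT hr ha) (Real.exp_pos _).le)
    (pfun_denominator_pos hT hr ha ht).le

theorem continuousOn_pfun (hT : 0 ≤ T) (hr : Continuous r) (hr₀ : ∀ s, 0 ≤ r s)
    (ha : Continuous a) (ha₀ : ∀ s, 0 ≤ a s) : ContinuousOn (pfun r a T) (Ici 0) := by
  have hR : Continuous fun t => ∫ s in (0:ℝ)..t, r s :=
    intervalIntegral.continuous_primitive (hr.intervalIntegrable · ·) 0
  have hA : Continuous fun t => ∫ s in (0:ℝ)..t, Real.exp (∫ τ in (0:ℝ)..s, r τ) * a s :=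
    intervalIntegral.continuous_primitive
      (((Real.continuous_exp.comp hR).mul ha).intervalIntegrable · ·) 0
  exact (continuous_const.mul (Real.continuous_exp.comp hR)).continuousOn.div
    (continuous_const.add (continuous_const.mul hA)).continuousOn fun t ht =>
      (pfun_denominator_pos hT hr₀ ha₀ ht).ne'

end Logistic

theorem stmt6 (T : ℝ) (hT : 0 < T)
    (d1 d2 r1 r2 a1 a2 b1 b2 J1 J2 : ℝ → ℝ)
    (hd1 : Continuous d1 ∧ (∀ t, 0 < d1 t) ∧ ∀ t, d1 (t + T) = d1 t)
    (hd2 : Continuous d2 ∧ (∀ t, 0 < d2 t) ∧ ∀ t, d2 (t + T) = d2 t)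
    (hr1 : Continuous r1 ∧ (∀ t, 0 < r1 t) ∧ ∀ t, r1 (t + T) = r1 t)
    (hr2 : Continuous r2 ∧ (∀ t, 0 < r2 t) ∧ ∀ t, r2 (t + T) = r2 t)
    (ha1 : Continuous a1 ∧ (∀ t, 0 < a1 t) ∧ ∀ t, a1 (t + T) = a1 t)
    (ha2 : Continuous a2 ∧ (∀ t, 0 < a2 t) ∧ ∀ t, a2 (t + T) = a2 t)
    (hb1 : Continuous b1 ∧ (∀ t, 0 < b1 t) ∧ ∀ t, b1 (t + T) = b1 t)
    (hb2 : Continuous b2 ∧ (∀ t, 0 < b2 t) ∧ ∀ t, b2 (t + T) = b2 t)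
    (hJ1 : Measurable J1 ∧ (∀ x, 0 ≤ J1 x) ∧ (∫ x, J1 x) = 1 ∧
      ∀ l : ℝ, Integrable fun x => J1 x * Real.exp (-l * x))
    (hJ2 : Measurable J2 ∧ (∀ x, 0 ≤ J2 x) ∧ (∫ x, J2 x) = 1 ∧
      ∀ l : ℝ, Integrable fun x => J2 x * Real.exp (-l * x))
    (φm ψm φp ψp φ ψ : ℝ → ℝ → ℝ) (φ0 ψ0 : ℝ → ℝ)
    (hlow : IsCauchyLower d1 d2 J1 J2 a1 b1 a2 b2
      (fun t => pfun r1 a1 T t) (fun t => pfun r2 b2 T t) φm ψm)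
    (hup : IsCauchyUpper d1 d2 J1 J2 a1 b1 a2 b2
      (fun t => pfun r1 a1 T t) (fun t => pfun r2 b2 T t) φp ψp)
    (hsol : IsCauchySolution d1 d2 J1 J2 a1 b1 a2 b2
      (fun t => pfun r1 a1 T t) (fun t => pfun r2 b2 T t) φ ψ)
    (hm01 : ∀ x t, φm x t ∈ Set.Icc (0:ℝ) 1 ∧ ψm x t ∈ Set.Icc (0:ℝ) 1)
    (hp01 : ∀ x t, φp x t ∈ Set.Icc (0:ℝ) 1 ∧ ψp x t ∈ Set.Icc (0:ℝ) 1)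
    (hbdd : ∃ M : ℝ, ∀ x t, |φ x t| ≤ M ∧ |ψ x t| ≤ M)
    (hinitdata : ∀ x : ℝ, φ x 0 = φ0 x ∧ ψ x 0 = ψ0 x)
    (hinit : ∀ x : ℝ, φm x 0 ≤ φ0 x ∧ φ0 x ≤ φp x 0 ∧ ψm x 0 ≤ ψ0 x ∧ ψ0 x ≤ ψp x 0) :
    ∀ x t : ℝ, 0 ≤ t →
      φm x t ≤ φ x t ∧ φ x t ≤ φp x t ∧ ψm x t ≤ ψ x t ∧ ψ x t ≤ ψp x t := by
  have hp := continuousOn_pfun hT.le hr1.1 (fun s => (hr1.2.1 s).le) ha1.1 fun s => (ha1.2.1 s).le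
  have hq := continuousOn_pfun hT.le hr2.1 (fun s => (hr2.2.1 s).le) hb2.1 fun s => (hb2.2.1 s).le
  have hp₀ : ∀ {s : ℝ}, 0 ≤ s → 0 ≤ pfun r1 a1 T s :=
    pfun_nonneg hT.le (fun s => (hr1.2.1 s).le) fun s => (ha1.2.1 s).le
  have hq₀ : ∀ {s : ℝ}, 0 ≤ s → 0 ≤ pfun r2 b2 T s :=
    pfun_nonneg hT.le (fun s => (hr2.2.1 s).le) fun s => (hb2.2.1 s).le
  obtain ⟨M, hM⟩ := hbdd
  have hB : ∀ {u : ℝ}, u ∈ Icc (0:ℝ) 1 → |u| ≤ max M 1 := fun hu =>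
    (abs_of_nonneg hu.1).trans_le (hu.2.trans (le_max_right _ _))
  have hM' : ∀ x t, |φ x t| ≤ max M 1 ∧ |ψ x t| ≤ max M 1 := fun x t =>
    ⟨(hM x t).1.trans (le_max_left _ _), (hM x t).2.trans (le_max_left _ _)⟩
  intro x t ht
  obtain ⟨C, hC⟩ := exists_forall_coeffBoundedAt (t₀ := t) hd1.1.continuousOn hd2.1.continuousOn
    (ha1.1.continuousOn.mul (hp.mono fun s hs => hs.1))
    (hb1.1.continuousOn.mul (hq.mono fun s hs => hs.1))
    (ha2.1.continuousOn.mul (hp.mono fun s hs => hs.1))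
    (hb2.1.continuousOn.mul (hq.mono fun s hs => hs.1))
    fun s hs => ⟨(hd1.2.1 s).le, (hd2.2.1 s).le, mul_nonneg (hb1.2.1 s).le (hq₀ hs.1),
      mul_nonneg (ha2.2.1 s).le (hp₀ hs.1)⟩
  have hJ1i : Integrable J1 := by simpa using hJ1.2.2.2 0
  have hJ2i : Integrable J2 := by simpa using hJ2.2.2.2 0
  have hlower := hlow.le_of_isCauchyUpper hsol.isCauchyUpper hJ1i hJ1.2.1 hJ1.2.2.1 hJ2i hJ2.2.1
    hJ2.2.2.1 (fun x t => ⟨hB (hm01 x t).1, hB (hm01 x t).2, hM' x t⟩)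
    (fun x t => .inl ⟨(hm01 x t).1.1, (hm01 x t).2.2⟩) ht hC
    (fun x => by rw [(hinitdata x).1, (hinitdata x).2]; exact ⟨(hinit x).1, (hinit x).2.2.1⟩) x
  have hupper := hsol.isCauchyLower.le_of_isCauchyUpper hup hJ1i hJ1.2.1 hJ1.2.2.1 hJ2i hJ2.2.1
    hJ2.2.2.1 (fun x t => ⟨(hM' x t).1, (hM' x t).2, hB (hp01 x t).1, hB (hp01 x t).2⟩)
    (fun x t => .inr ⟨(hp01 x t).1.1, (hp01 x t).2.2⟩) ht hC
    (fun x => by rw [(hinitdata x).1, (hinitdata x).2]; exact ⟨(hinit x).2.1, (hinit x).2.2.2⟩) x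
  exact ⟨hlower.1, hupper.1, hlower.2, hupper.2⟩
end

section
/- Assume: T > 0; r1, r2, a1, a2, b1, b2 : ℝ → ℝ are continuous, positive, T-periodic, and the bistability condition (A2) holds: ∫_0^T (a1(t)p(t) − b1(t)q(t)) dt < 0 and ∫_0^T (b2(t)q(t) − a2(t)p(t)) dt < 0. Then there exist a constant λ0 > 0 and continuously differentiable, positive, T-periodic functions p1⁻, p2⁻ : ℝ → ℝ such that for all t: (p1⁻)'(t) ≥ [a1(t)p(t) − b1(t)q(t) + λ0] p1⁻(t) and (p2⁻)'(t) ≥ a2(t)p(t)p1⁻(t) + [λ0 − b2(t)q(t)] p2⁻(t). -/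
open MeasureTheory Set Filter

noncomputable def Efun (r : ℝ → ℝ) (t : ℝ) : ℝ := ∫ s in (0:ℝ)..t, r s
noncomputable def Afun (r a : ℝ → ℝ) (t : ℝ) : ℝ :=
  ∫ s in (0:ℝ)..t, Real.exp (Efun r s) * a s
noncomputable def Dfun (r a : ℝ → ℝ) (T t : ℝ) : ℝ := 1 + p0c r a T * Afun r a t

lemma pfun_eq (r a : ℝ → ℝ) (T t : ℝ) :
    pfun r a T t = p0c r a T * Real.exp (Efun r t) / Dfun r a T t := rfl

lemma p0c_eq (r a : ℝ → ℝ) (T : ℝ) :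
    p0c r a T = (Real.exp (Efun r T) - 1) / Afun r a T := rfl

lemma hasDerivAt_Efun {r : ℝ → ℝ} (hr : Continuous r) (t : ℝ) :
    HasDerivAt (Efun r) (r t) t :=
  (hr.integral_hasStrictDerivAt 0 t).hasDerivAt

lemma continuous_Efun {r : ℝ → ℝ} (hr : Continuous r) : Continuous (Efun r) :=
  continuous_iff_continuousAt.2 fun t => (hasDerivAt_Efun hr t).continuousAt

lemma continuous_integrand {r a : ℝ → ℝ} (hr : Continuous r) (ha : Continuous a) :
    Continuous (fun s => Real.exp (Efun r s) * a s) :=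
  ((continuous_Efun hr).rexp.mul ha)

lemma hasDerivAt_Afun {r a : ℝ → ℝ} (hr : Continuous r) (ha : Continuous a) (t : ℝ) :
    HasDerivAt (Afun r a) (Real.exp (Efun r t) * a t) t :=
  ((continuous_integrand hr ha).integral_hasStrictDerivAt 0 t).hasDerivAt

lemma continuous_Afun {r a : ℝ → ℝ} (hr : Continuous r) (ha : Continuous a) :
    Continuous (Afun r a) :=
  continuous_iff_continuousAt.2 fun t => (hasDerivAt_Afun hr ha t).continuousAt

lemma Efun_pos_T {r : ℝ → ℝ} {T : ℝ} (hr : Continuous r) (hrp : ∀ t, 0 < r t)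
    (hT : 0 < T) : 0 < Efun r T :=
  intervalIntegral.intervalIntegral_pos_of_pos (hr.intervalIntegrable 0 T) hrp hT

lemma Afun_pos_T {r a : ℝ → ℝ} {T : ℝ} (hr : Continuous r) (ha : Continuous a)
    (hap : ∀ t, 0 < a t) (hT : 0 < T) : 0 < Afun r a T :=
  intervalIntegral.intervalIntegral_pos_of_pos
    ((continuous_integrand hr ha).intervalIntegrable 0 T)
    (fun x => mul_pos (Real.exp_pos _) (hap x)) hT

lemma p0c_pos {r a : ℝ → ℝ} {T : ℝ} (hr : Continuous r) (hrp : ∀ t, 0 < r t)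
    (ha : Continuous a) (hap : ∀ t, 0 < a t) (hT : 0 < T) : 0 < p0c r a T := by
  rw [p0c_eq]
  apply div_pos _ (Afun_pos_T hr ha hap hT)
  have h := Efun_pos_T hr hrp hT
  have := Real.one_lt_exp_iff.mpr h
  linarith

lemma Efun_add {r : ℝ → ℝ} {T : ℝ} (hr : Continuous r) (hrP : ∀ t, r (t + T) = r t)
    (t : ℝ) : Efun r (t + T) = Efun r T + Efun r t := by
  have h1 : Efun r (t + T) = Efun r T + ∫ s in T..(t + T), r s := by
    rw [Efun, Efun, ← intervalIntegral.integral_add_adjacent_intervals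
      (hr.intervalIntegrable 0 T) (hr.intervalIntegrable T (t + T))]
  have h := intervalIntegral.integral_comp_add_right (a := 0) (b := t) (fun s => r s) T
  simp only [zero_add, hrP] at h
  rw [h1, ← h]; rfl

lemma Afun_add {r a : ℝ → ℝ} {T : ℝ} (hr : Continuous r) (hrP : ∀ t, r (t + T) = r t)
    (ha : Continuous a) (haP : ∀ t, a (t + T) = a t) (t : ℝ) :
    Afun r a (t + T) = Afun r a T + Real.exp (Efun r T) * Afun r a t := by
  have h1 : Afun r a (t + T) = Afun r a T
      + ∫ s in T..(t + T), Real.exp (Efun r s) * a s := by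
    rw [Afun, Afun, ← intervalIntegral.integral_add_adjacent_intervals
      ((continuous_integrand hr ha).intervalIntegrable 0 T)
      ((continuous_integrand hr ha).intervalIntegrable T (t + T))]
  have key : ∀ x : ℝ, Real.exp (Efun r (x + T)) * a (x + T)
      = Real.exp (Efun r T) * (Real.exp (Efun r x) * a x) := by
    intro x
    rw [Efun_add hr hrP, haP, Real.exp_add]; ring
  have h := intervalIntegral.integral_comp_add_right (a := 0) (b := t)
    (fun s => Real.exp (Efun r s) * a s) T
  simp only [zero_add, key] at h
  rw [intervalIntegral.integral_const_mul] at h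
  rw [h1, ← h]; rfl

lemma Dfun_mul {r a : ℝ → ℝ} {T : ℝ} (hr : Continuous r) (hrp : ∀ t, 0 < r t)
    (hrP : ∀ t, r (t + T) = r t) (ha : Continuous a) (hap : ∀ t, 0 < a t)
    (haP : ∀ t, a (t + T) = a t) (hT : 0 < T) (t : ℝ) :
    Dfun r a T (t + T) = Real.exp (Efun r T) * Dfun r a T t := by
  have hAT := Afun_pos_T hr ha hap hT
  have hcA : p0c r a T * Afun r a T = Real.exp (Efun r T) - 1 := by
    rw [p0c_eq, div_mul_cancel₀ _ hAT.ne']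
  rw [Dfun, Dfun, Afun_add hr hrP ha haP]
  nlinarith [hcA]

lemma Dfun_mul_pow {r a : ℝ → ℝ} {T : ℝ} (hr : Continuous r) (hrp : ∀ t, 0 < r t)
    (hrP : ∀ t, r (t + T) = r t) (ha : Continuous a) (hap : ∀ t, 0 < a t)
    (haP : ∀ t, a (t + T) = a t) (hT : 0 < T) (n : ℕ) (t : ℝ) :
    Dfun r a T (t + n * T) = Real.exp (Efun r T) ^ n * Dfun r a T t := by
  induction n with
  | zero => simp
  | succ n ih =>
    have : t + (n + 1 : ℕ) * T = (t + n * T) + T := by push_cast; ring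
    rw [this, Dfun_mul hr hrp hrP ha hap haP hT, ih, pow_succ]; ring

lemma Dfun_strictMono {r a : ℝ → ℝ} {T : ℝ} (hr : Continuous r) (hrp : ∀ t, 0 < r t)
    (ha : Continuous a) (hap : ∀ t, 0 < a t) (hT : 0 < T)
    (hc : 0 < p0c r a T) : StrictMono (Dfun r a T) := by
  have hD : ∀ t, HasDerivAt (Dfun r a T) (p0c r a T * (Real.exp (Efun r t) * a t)) t := by
    intro t
    exact ((hasDerivAt_Afun hr ha t).const_mul (p0c r a T)).const_add 1
  apply StrictMono.comp (f := id) (g := Dfun r a T) ?_ strictMono_id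
  apply strictMono_of_deriv_pos
  intro x
  rw [(hD x).deriv]
  exact mul_pos hc (mul_pos (Real.exp_pos _) (hap x))

lemma Dfun_pos {r a : ℝ → ℝ} {T : ℝ} (hr : Continuous r) (hrp : ∀ t, 0 < r t)
    (hrP : ∀ t, r (t + T) = r t) (ha : Continuous a) (hap : ∀ t, 0 < a t)
    (haP : ∀ t, a (t + T) = a t) (hT : 0 < T) (t : ℝ) : 0 < Dfun r a T t := by
  have hc := p0c_pos hr hrp ha hap hT
  have hmono := Dfun_strictMono hr hrp ha hap hT hc
  have hD0 : Dfun r a T 0 = 1 := by simp [Dfun, Afun]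
  obtain ⟨n, hn⟩ := exists_nat_ge (-t / T)
  have htn : (0:ℝ) ≤ t + n * T := by
    rw [div_le_iff₀ hT] at hn; linarith
  have h1 : 1 ≤ Dfun r a T (t + n * T) := by
    rcases eq_or_lt_of_le htn with h | h
    · rw [← h, hD0]
    · rw [← hD0]; exact (hmono h).le
  have h2 := Dfun_mul_pow hr hrp hrP ha hap haP hT n t
  have hp : 0 < Real.exp (Efun r T) ^ n := pow_pos (Real.exp_pos _) n
  nlinarith

lemma pfun_pos {r a : ℝ → ℝ} {T : ℝ} (hr : Continuous r) (hrp : ∀ t, 0 < r t)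
    (hrP : ∀ t, r (t + T) = r t) (ha : Continuous a) (hap : ∀ t, 0 < a t)
    (haP : ∀ t, a (t + T) = a t) (hT : 0 < T) (t : ℝ) : 0 < pfun r a T t := by
  rw [pfun_eq]
  exact div_pos (mul_pos (p0c_pos hr hrp ha hap hT) (Real.exp_pos _))
    (Dfun_pos hr hrp hrP ha hap haP hT t)

lemma pfun_continuous {r a : ℝ → ℝ} {T : ℝ} (hr : Continuous r) (hrp : ∀ t, 0 < r t)
    (hrP : ∀ t, r (t + T) = r t) (ha : Continuous a) (hap : ∀ t, 0 < a t)
    (haP : ∀ t, a (t + T) = a t) (hT : 0 < T) : Continuous (pfun r a T) := by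
  have : pfun r a T = fun t => p0c r a T * Real.exp (Efun r t) / Dfun r a T t := rfl
  rw [this]
  apply Continuous.div
  · exact (continuous_const.mul (continuous_Efun hr).rexp)
  · exact continuous_const.add (continuous_const.mul (continuous_Afun hr ha))
  · exact fun t => (Dfun_pos hr hrp hrP ha hap haP hT t).ne'

lemma pfun_periodic {r a : ℝ → ℝ} {T : ℝ} (hr : Continuous r) (hrp : ∀ t, 0 < r t)
    (hrP : ∀ t, r (t + T) = r t) (ha : Continuous a) (hap : ∀ t, 0 < a t)
    (haP : ∀ t, a (t + T) = a t) (hT : 0 < T) (t : ℝ) :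
    pfun r a T (t + T) = pfun r a T t := by
  have hDpos := Dfun_pos hr hrp hrP ha hap haP hT t
  rw [pfun_eq, pfun_eq, Efun_add hr hrP, Dfun_mul hr hrp hrP ha hap haP hT,
    Real.exp_add]
  rw [show p0c r a T * (Real.exp (Efun r T) * Real.exp (Efun r t))
      = Real.exp (Efun r T) * (p0c r a T * Real.exp (Efun r t)) by ring]
  rw [mul_div_mul_left _ _ (Real.exp_pos (Efun r T)).ne']

noncomputable def Pfun (g : ℝ → ℝ) (T t : ℝ) : ℝ :=
  Real.exp ((∫ s in (0:ℝ)..t, g s) - (∫ s in (0:ℝ)..T, g s) / T * t)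

lemma Pfun_pos (g : ℝ → ℝ) (T t : ℝ) : 0 < Pfun g T t := Real.exp_pos _

lemma hasDerivAt_Pfun {g : ℝ → ℝ} (hg : Continuous g) (T t : ℝ) :
    HasDerivAt (Pfun g T) ((g t - (∫ s in (0:ℝ)..T, g s) / T) * Pfun g T t) t := by
  have h1 : HasDerivAt (fun u => (∫ s in (0:ℝ)..u, g s)
      - (∫ s in (0:ℝ)..T, g s) / T * u) (g t - (∫ s in (0:ℝ)..T, g s) / T) t := by
    have h2 : HasDerivAt (fun u : ℝ => (∫ s in (0:ℝ)..T, g s) / T * u)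
        ((∫ s in (0:ℝ)..T, g s) / T) t := by
      simpa using (hasDerivAt_id t).const_mul ((∫ s in (0:ℝ)..T, g s) / T)
    exact ((hg.integral_hasStrictDerivAt 0 t).hasDerivAt).sub h2
  have := h1.exp
  rw [mul_comm] at this
  exact this

lemma Pfun_periodic {g : ℝ → ℝ} {T : ℝ} (hg : Continuous g)
    (hgP : Function.Periodic g T) (hT : 0 < T) (t : ℝ) :
    Pfun g T (t + T) = Pfun g T t := by
  have h1 : (∫ s in (0:ℝ)..(t + T), g s)
      = (∫ s in (0:ℝ)..t, g s) + ∫ s in (0:ℝ)..T, g s := by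
    rw [← intervalIntegral.integral_add_adjacent_intervals
      (hg.intervalIntegrable 0 t) (hg.intervalIntegrable t (t + T))]
    rw [hgP.intervalIntegral_add_eq t 0, zero_add]
  rw [Pfun, Pfun, h1]
  congr 1
  field_simp
  ring

theorem stmt7 (T : ℝ) (hT : 0 < T) (r1 r2 a1 a2 b1 b2 : ℝ → ℝ)
    (hr1 : Continuous r1 ∧ (∀ t, 0 < r1 t) ∧ ∀ t, r1 (t + T) = r1 t)
    (hr2 : Continuous r2 ∧ (∀ t, 0 < r2 t) ∧ ∀ t, r2 (t + T) = r2 t)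
    (ha1 : Continuous a1 ∧ (∀ t, 0 < a1 t) ∧ ∀ t, a1 (t + T) = a1 t)
    (ha2 : Continuous a2 ∧ (∀ t, 0 < a2 t) ∧ ∀ t, a2 (t + T) = a2 t)
    (hb1 : Continuous b1 ∧ (∀ t, 0 < b1 t) ∧ ∀ t, b1 (t + T) = b1 t)
    (hb2 : Continuous b2 ∧ (∀ t, 0 < b2 t) ∧ ∀ t, b2 (t + T) = b2 t)
    (hA2 : (∫ t in (0:ℝ)..T, (a1 t * pfun r1 a1 T t - b1 t * pfun r2 b2 T t)) < 0 ∧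
      (∫ t in (0:ℝ)..T, (b2 t * pfun r2 b2 T t - a2 t * pfun r1 a1 T t)) < 0)
    :
    ∃ lam0 : ℝ, 0 < lam0 ∧ ∃ p1 p2 p1' p2' : ℝ → ℝ,
      Continuous p1' ∧ Continuous p2' ∧
      (∀ t, HasDerivAt p1 (p1' t) t) ∧ (∀ t, HasDerivAt p2 (p2' t) t) ∧
      (∀ t, 0 < p1 t) ∧ (∀ t, 0 < p2 t) ∧
      (∀ t, p1 (t + T) = p1 t) ∧ (∀ t, p2 (t + T) = p2 t) ∧
      (∀ t, (a1 t * pfun r1 a1 T t - b1 t * pfun r2 b2 T t + lam0) * p1 t ≤ p1' t) ∧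
      (∀ t, a2 t * pfun r1 a1 T t * p1 t + (lam0 - b2 t * pfun r2 b2 T t) * p2 t ≤ p2' t) := by
  obtain ⟨hr1c, hr1p, hr1P⟩ := hr1
  obtain ⟨hr2c, hr2p, hr2P⟩ := hr2
  obtain ⟨ha1c, ha1p, ha1P⟩ := ha1
  obtain ⟨ha2c, ha2p, ha2P⟩ := ha2
  obtain ⟨hb1c, hb1p, hb1P⟩ := hb1
  obtain ⟨hb2c, hb2p, hb2P⟩ := hb2
  -- properties of p and q
  have hpC : Continuous (pfun r1 a1 T) := pfun_continuous hr1c hr1p hr1P ha1c ha1p ha1P hT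
  have hqC : Continuous (pfun r2 b2 T) := pfun_continuous hr2c hr2p hr2P hb2c hb2p hb2P hT
  have hpPos : ∀ t, 0 < pfun r1 a1 T t := pfun_pos hr1c hr1p hr1P ha1c ha1p ha1P hT
  have hqPos : ∀ t, 0 < pfun r2 b2 T t := pfun_pos hr2c hr2p hr2P hb2c hb2p hb2P hT
  have hpPer : ∀ t, pfun r1 a1 T (t + T) = pfun r1 a1 T t :=
    pfun_periodic hr1c hr1p hr1P ha1c ha1p ha1P hT
  have hqPer : ∀ t, pfun r2 b2 T (t + T) = pfun r2 b2 T t :=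
    pfun_periodic hr2c hr2p hr2P hb2c hb2p hb2P hT
  -- the two driving functions
  set g1 : ℝ → ℝ := fun t => a1 t * pfun r1 a1 T t - b1 t * pfun r2 b2 T t with hg1def
  set h2 : ℝ → ℝ := fun t => -(b2 t * pfun r2 b2 T t) with hh2def
  have hg1C : Continuous g1 := (ha1c.mul hpC).sub (hb1c.mul hqC)
  have hh2C : Continuous h2 := (hb2c.mul hqC).neg
  have hg1P : Function.Periodic g1 T := by
    intro t; simp only [hg1def, ha1P, hb1P, hpPer, hqPer]
  have hh2P : Function.Periodic h2 T := by
    intro t; simp only [hh2def, hb2P, hqPer]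
  set m1 : ℝ := (∫ s in (0:ℝ)..T, g1 s) / T with hm1def
  set m2 : ℝ := (∫ s in (0:ℝ)..T, h2 s) / T with hm2def
  have hm1 : m1 < 0 := by
    apply div_neg_of_neg_of_pos _ hT
    exact hA2.1
  have hm2 : m2 < 0 := by
    apply div_neg_of_neg_of_pos _ hT
    have hpos : (0:ℝ) < ∫ s in (0:ℝ)..T, b2 s * pfun r2 b2 T s :=
      intervalIntegral.intervalIntegral_pos_of_pos
        ((hb2c.mul hqC).intervalIntegrable 0 T)
        (fun x => mul_pos (hb2p x) (hqPos x)) hT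
    have : (∫ s in (0:ℝ)..T, h2 s) = -∫ s in (0:ℝ)..T, b2 s * pfun r2 b2 T s := by
      simp only [hh2def, intervalIntegral.integral_neg]
    rw [this]; linarith
  set lam0 : ℝ := min (-m1) (-m2) / 2 with hlamdef
  have hlam : 0 < lam0 := by
    apply div_pos _ two_pos
    exact lt_min (by linarith) (by linarith)
  have hlam1 : lam0 ≤ -m1 := by
    rw [hlamdef]; have := min_le_left (-m1) (-m2); linarith
  have hlam2 : lam0 ≤ (-m2) / 2 := by
    rw [hlamdef]; have := min_le_right (-m1) (-m2); linarith
  -- the comparison function and its max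
  set P1 : ℝ → ℝ := Pfun g1 T with hP1def
  set P2 : ℝ → ℝ := Pfun h2 T with hP2def
  have hP1C : Continuous P1 := continuous_iff_continuousAt.2
    fun t => (hasDerivAt_Pfun hg1C T t).continuousAt
  have hP2C : Continuous P2 := continuous_iff_continuousAt.2
    fun t => (hasDerivAt_Pfun hh2C T t).continuousAt
  set φ : ℝ → ℝ := fun t => a2 t * pfun r1 a1 T t * P1 t / P2 t with hφdef
  have hφC : Continuous φ := ((ha2c.mul hpC).mul hP1C).div hP2C
    (fun t => (Pfun_pos h2 T t).ne')
  have hφP : Function.Periodic φ T := by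
    intro t
    simp only [hφdef, hP1def, hP2def, ha2P, hpPer, Pfun_periodic hg1C hg1P hT, Pfun_periodic hh2C hh2P hT]
  obtain ⟨x0, hx0mem, hx0max⟩ := isCompact_Icc.exists_isMaxOn
    (⟨0, le_refl 0, hT.le⟩ : (Icc (0:ℝ) T).Nonempty) hφC.continuousOn
  set M : ℝ := φ x0 with hMdef
  have hMpos : 0 < M := by
    have h0 : 0 < φ 0 := by
      apply div_pos (mul_pos (mul_pos (ha2p 0) (hpPos 0)) (Pfun_pos g1 T 0)) (Pfun_pos h2 T 0)
    exact h0.trans_le (hx0max (⟨le_refl 0, hT.le⟩ : (0:ℝ) ∈ Icc (0:ℝ) T))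
  have hφbound : ∀ t, φ t ≤ M := by
    intro t
    obtain ⟨y, hy, hyeq⟩ := hφP.exists_mem_Ico₀ hT t
    rw [hyeq]
    exact hx0max (Ico_subset_Icc_self hy)
  set ε : ℝ := (-m2 - lam0) / M with hεdef
  have hεpos : 0 < ε := div_pos (by linarith) hMpos
  have hεM : ε * M = -m2 - lam0 := div_mul_cancel₀ _ hMpos.ne'
  -- assemble
  refine ⟨lam0, hlam, fun t => ε * P1 t, P2,
    fun t => ε * ((g1 t - m1) * P1 t), fun t => (h2 t - m2) * P2 t, ?_, ?_, ?_, ?_, ?_, ?_,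
    ?_, ?_, ?_, ?_⟩
  · exact continuous_const.mul ((hg1C.sub continuous_const).mul hP1C)
  · exact (hh2C.sub continuous_const).mul hP2C
  · intro t
    exact (hasDerivAt_Pfun hg1C T t).const_mul ε
  · intro t
    exact hasDerivAt_Pfun hh2C T t
  · exact fun t => mul_pos hεpos (Pfun_pos g1 T t)
  · exact fun t => Pfun_pos h2 T t
  · intro t
    show ε * P1 (t + T) = ε * P1 t
    rw [hP1def, Pfun_periodic hg1C hg1P hT]
  · intro t; exact Pfun_periodic hh2C hh2P hT t
  · intro t
    show (a1 t * pfun r1 a1 T t - b1 t * pfun r2 b2 T t + lam0) * (ε * P1 t)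
      ≤ ε * ((g1 t - m1) * P1 t)
    have hg : a1 t * pfun r1 a1 T t - b1 t * pfun r2 b2 T t = g1 t := rfl
    rw [hg]
    have hP : 0 < P1 t := Pfun_pos g1 T t
    nlinarith [mul_nonneg (mul_nonneg hεpos.le hP.le) (by linarith : (0:ℝ) ≤ -m1 - lam0)]
  · intro t
    show a2 t * pfun r1 a1 T t * (ε * P1 t) + (lam0 - b2 t * pfun r2 b2 T t) * P2 t
      ≤ (h2 t - m2) * P2 t
    have hP2pos : 0 < P2 t := Pfun_pos h2 T t
    have hb : a2 t * pfun r1 a1 T t * P1 t ≤ M * P2 t := by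
      have := hφbound t
      rw [hφdef] at this
      exact (div_le_iff₀ hP2pos).mp this
    have hc : ε * (a2 t * pfun r1 a1 T t * P1 t) ≤ ε * (M * P2 t) :=
      mul_le_mul_of_nonneg_left hb hεpos.le
    have hd : ε * (M * P2 t) = (-m2 - lam0) * P2 t := by rw [← mul_assoc, hεM]
    have hh : lam0 - b2 t * pfun r2 b2 T t = lam0 + h2 t := by
      show _ = lam0 + -(b2 t * pfun r2 b2 T t); ring
    rw [hh]
    nlinarith [hc, hd]
end
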